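/- Under the setup of the rank-one Birman–Schwinger principle, if $\Delta(k, E_{\min}(k)) := 1 - \mu(2\pi)^{-3}\int_{\mathbb{T}^3}(E_k(q)-E_{\min}(k))^{-1}dq < 0$ (the integral possibly being $+\infty$, in which case the condition holds), then $h(k) = h^0(k) - \mu v$ has exactly one eigenvalue $z(k)$ in $(-\infty, E_{\min}(k))$. -/

import Mathlib

/-!
An eigenvector of `h⁰ - μ v` with eigenvalue `z < Emin` solves `(E q - z) f q = μ (2π)⁻³ ∫ f`,
so it is a nonzero multiple of `(E q - z)⁻¹`, and such a multiple is an eigenvector exactly when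
`Δ(z) = 1 - μ (2π)⁻³ ∫ (E q - z)⁻¹ dq` vanishes. On `(-∞, Emin)` the function `Δ` is continuous
and strictly decreasing, tends to `1` at `-∞`, and by Fatou's lemma is negative somewhere once
`Δ(Emin) < 0`; hence it has exactly one zero there.
-/

open Real MeasureTheory Set

/-- The torus `𝕋³ = (-π, π]³` as a subset of `ℝ³`. -/
noncomputable def T3 : Set (Fin 3 → ℝ) := Set.univ.pi fun _ => Set.Ioc (-Real.pi) Real.pi

/-- The measure on the torus: Lebesgue measure restricted to `(-π,π]³`. -/
noncomputable def μT : Measure (Fin 3 → ℝ) := MeasureTheory.volume.restrict T3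

open Filter Topology
open scoped ENNReal

instance : IsFiniteMeasure μT := by
  constructor
  rw [μT, Measure.restrict_apply_univ, T3, volume_pi_pi]
  simp [Real.volume_Ioc]

instance : NeZero μT := by
  constructor
  rw [← Measure.measure_univ_ne_zero, μT, Measure.restrict_apply_univ, T3, volume_pi_pi]
  simp [Real.volume_Ioc, Real.pi_pos]

lemma integral_pos_of_ae_pos {α : Type*} [MeasurableSpace α] {μ : Measure α} [NeZero μ]
    {f : α → ℝ} (hfi : Integrable f μ) (hf : ∀ᵐ x ∂μ, 0 < f x) : 0 < ∫ x, f x ∂μ := by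
  have hnonneg : 0 ≤ᵐ[μ] f := hf.mono fun _ h => h.le
  refine (integral_nonneg_of_ae hnonneg).lt_of_ne fun h => ?_
  obtain ⟨x, hx, hx0⟩ :=
    (hf.and ((integral_eq_zero_iff_of_nonneg_ae hnonneg hfi).1 h.symm)).exists
  exact hx.ne' hx0

lemma existsUnique_eq_zero_of_strictAntiOn {g : ℝ → ℝ} {e a b : ℝ}
    (hanti : StrictAntiOn g (Iio e)) (hcont : ContinuousOn g (Iio e))
    (ha : a < e) (hga : 0 < g a) (hb : b < e) (hgb : g b < 0) :
    ∃! z, z < e ∧ g z = 0 := by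
  have hab : a ≤ b := ((hanti.lt_iff_gt hb ha).1 (hgb.trans hga)).le
  obtain ⟨z, hz, hgz⟩ := intermediate_value_Icc' hab
    (hcont.mono fun x hx => hx.2.trans_lt hb) ⟨hgb.le, hga.le⟩
  have hze : z < e := hz.2.trans_lt hb
  exact ⟨z, ⟨hze, hgz⟩, fun y ⟨hye, hgy⟩ => hanti.injOn hye hze (hgy.trans hgz.symm)⟩

/-- The paper's Fredholm determinant `Δ(k, z)`, with `lam = μ (2π)⁻³`. -/
noncomputable def fredholmDet {α : Type*} [MeasurableSpace α] (μ : Measure α) (E : α → ℝ)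
    (lam z : ℝ) : ℝ :=
  1 - lam * ∫ q, (E q - z)⁻¹ ∂μ

section Resolvent

variable {α : Type*} [MeasurableSpace α] {μ : Measure α} {E : α → ℝ} {Emin z : ℝ}

lemma ae_inv_sub_mem_Ioc (hlow : ∀ᵐ q ∂μ, Emin ≤ E q) (hz : z < Emin) :
    ∀ᵐ q ∂μ, (E q - z)⁻¹ ∈ Ioc 0 (Emin - z)⁻¹ := by
  filter_upwards [hlow] with q hq
  exact ⟨inv_pos.2 (by linarith), inv_anti₀ (by linarith) (by linarith)⟩

lemma memLp_inv_sub [IsFiniteMeasure μ] (p : ℝ≥0∞) (hE : Measurable E)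
    (hlow : ∀ᵐ q ∂μ, Emin ≤ E q) (hz : z < Emin) :
    MemLp (fun q => (E q - z)⁻¹) p μ := by
  refine MemLp.of_bound (hE.sub_const z).inv.aestronglyMeasurable (Emin - z)⁻¹ ?_
  filter_upwards [ae_inv_sub_mem_Ioc hlow hz] with q hq
  rw [Real.norm_eq_abs, abs_of_pos hq.1]
  exact hq.2

lemma integrable_inv_sub [IsFiniteMeasure μ] (hE : Measurable E)
    (hlow : ∀ᵐ q ∂μ, Emin ≤ E q) (hz : z < Emin) :
    Integrable (fun q => (E q - z)⁻¹) μ :=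
  memLp_one_iff_integrable.1 (memLp_inv_sub 1 hE hlow hz)

lemma integral_inv_sub_nonneg (hlow : ∀ᵐ q ∂μ, Emin ≤ E q) (hz : z < Emin) :
    0 ≤ ∫ q, (E q - z)⁻¹ ∂μ :=
  integral_nonneg_of_ae ((ae_inv_sub_mem_Ioc hlow hz).mono fun _ hq => hq.1.le)

lemma integral_inv_sub_le [IsFiniteMeasure μ] (hE : Measurable E)
    (hlow : ∀ᵐ q ∂μ, Emin ≤ E q) (hz : z < Emin) :
    ∫ q, (E q - z)⁻¹ ∂μ ≤ (Emin - z)⁻¹ * μ.real univ := by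
  calc ∫ q, (E q - z)⁻¹ ∂μ ≤ ∫ _, (Emin - z)⁻¹ ∂μ :=
        integral_mono_ae (integrable_inv_sub hE hlow hz) (integrable_const _)
          ((ae_inv_sub_mem_Ioc hlow hz).mono fun _ hq => hq.2)
    _ = (Emin - z)⁻¹ * μ.real univ := by rw [integral_const, smul_eq_mul, mul_comm]

lemma lintegral_ofReal_inv_sub_le_iSup (hE : Measurable E) (hlow : ∀ᵐ q ∂μ, Emin ≤ E q) :
    ∫⁻ q, ENNReal.ofReal (E q - Emin)⁻¹ ∂μ ≤
      ⨆ (z) (_ : z < Emin), ∫⁻ q, ENNReal.ofReal (E q - z)⁻¹ ∂μ := by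
  obtain ⟨zn, -, hzn_lt, hzn⟩ := exists_seq_strictMono_tendsto Emin
  calc ∫⁻ q, ENNReal.ofReal (E q - Emin)⁻¹ ∂μ
        ≤ ∫⁻ q, liminf (fun n => ENNReal.ofReal (E q - zn n)⁻¹) atTop ∂μ := by
        refine lintegral_mono_ae ?_
        filter_upwards [hlow] with q hq
        rcases hq.eq_or_lt with heq | hlt
        -- at `E q = Emin` the left integrand is the junk value `ofReal 0⁻¹ = 0`
        · simp [← heq]
        · have hcont : Tendsto (fun z => (E q - z)⁻¹) (𝓝 Emin) (𝓝 (E q - Emin)⁻¹) :=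
            (tendsto_const_nhds.sub tendsto_id).inv₀ (sub_ne_zero.2 hlt.ne')
          exact (ENNReal.tendsto_ofReal (hcont.comp hzn)).liminf_eq.ge
    _ ≤ liminf (fun n => ∫⁻ q, ENNReal.ofReal (E q - zn n)⁻¹ ∂μ) atTop :=
        lintegral_liminf_le fun n => (hE.sub_const _).inv.ennreal_ofReal
    _ ≤ ⨆ (z) (_ : z < Emin), ∫⁻ q, ENNReal.ofReal (E q - z)⁻¹ ∂μ :=
        liminf_le_of_frequently_le (Frequently.of_forall fun n =>
          le_iSup₂_of_le (zn n) (hzn_lt n) le_rfl)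

end Resolvent

section FredholmDet

variable {α : Type*} [MeasurableSpace α] {μ : Measure α} [IsFiniteMeasure μ] {E : α → ℝ}
  {Emin lam : ℝ}

lemma strictAntiOn_fredholmDet [NeZero μ] (hE : Measurable E) (hlow : ∀ᵐ q ∂μ, Emin ≤ E q)
    (hlam : 0 < lam) : StrictAntiOn (fredholmDet μ E lam) (Iio Emin) := by
  intro z₁ hz₁ z₂ hz₂ h12
  have hint₁ := integrable_inv_sub hE hlow hz₁
  have hint₂ := integrable_inv_sub hE hlow hz₂
  have hlt : ∫ q, (E q - z₁)⁻¹ ∂μ < ∫ q, (E q - z₂)⁻¹ ∂μ := by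
    rw [← sub_pos, ← integral_sub hint₂ hint₁]
    refine integral_pos_of_ae_pos (hint₂.sub hint₁) ?_
    filter_upwards [hlow] with q hq
    exact sub_pos.2 (inv_strictAnti₀ (by linarith [mem_Iio.1 hz₂]) (by linarith))
  exact sub_lt_sub_left (mul_lt_mul_of_pos_left hlt hlam) 1

lemma continuousOn_fredholmDet (hE : Measurable E) (hlow : ∀ᵐ q ∂μ, Emin ≤ E q) :
    ContinuousOn (fredholmDet μ E lam) (Iio Emin) := by
  intro z hz
  refine (continuousAt_const.sub (continuousAt_const.mul ?_)).continuousWithinAt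
  obtain ⟨m, hzm, hmE⟩ := exists_between (mem_Iio.1 hz)
  refine continuousAt_of_dominated (bound := fun _ => (Emin - m)⁻¹)
    (Eventually.of_forall fun x => (hE.sub_const x).inv.aestronglyMeasurable) ?_
    (integrable_const _) ?_
  · filter_upwards [Iio_mem_nhds hzm] with x hx
    filter_upwards [ae_inv_sub_mem_Ioc hlow (hx.trans hmE)] with q hq
    rw [Real.norm_eq_abs, abs_of_pos hq.1]
    exact hq.2.trans (inv_anti₀ (by linarith) (by linarith [mem_Iio.1 hx]))
  · filter_upwards [hlow] with q hq
    exact (continuousAt_const.sub continuousAt_id).inv₀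
      (sub_pos.2 (by linarith [mem_Iio.1 hz] : z < E q)).ne'

lemma tendsto_fredholmDet_atBot (hE : Measurable E) (hlow : ∀ᵐ q ∂μ, Emin ≤ E q) :
    Tendsto (fredholmDet μ E lam) atBot (𝓝 1) := by
  have hbound : Tendsto (fun z => (Emin - z)⁻¹ * μ.real univ) atBot (𝓝 0) := by
    simpa [sub_eq_add_neg] using (tendsto_inv_atTop_zero.comp
      (tendsto_atTop_add_const_left _ Emin tendsto_neg_atBot_atTop)).mul_const (μ.real univ)
  have hint : Tendsto (fun z => ∫ q, (E q - z)⁻¹ ∂μ) atBot (𝓝 0) :=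
    tendsto_of_tendsto_of_tendsto_of_le_of_le' tendsto_const_nhds hbound
      ((eventually_lt_atBot Emin).mono fun _ hz => integral_inv_sub_nonneg hlow hz)
      ((eventually_lt_atBot Emin).mono fun _ hz => integral_inv_sub_le hE hlow hz)
  unfold fredholmDet
  simpa using tendsto_const_nhds.sub (hint.const_mul lam)

lemma exists_fredholmDet_neg (hE : Measurable E) (hlow : ∀ᵐ q ∂μ, Emin ≤ E q)
    (h : 1 < ENNReal.ofReal lam * ∫⁻ q, ENNReal.ofReal (E q - Emin)⁻¹ ∂μ) :
    ∃ z < Emin, fredholmDet μ E lam z < 0 := by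
  have h' := h.trans_le (mul_le_mul_right (lintegral_ofReal_inv_sub_le_iSup hE hlow) _)
  simp_rw [ENNReal.mul_iSup, lt_iSup_iff] at h'
  obtain ⟨z, hz, hlt⟩ := h'
  rw [← ofReal_integral_eq_lintegral_ofReal (integrable_inv_sub hE hlow hz)
      ((ae_inv_sub_mem_Ioc hlow hz).mono fun _ hq => hq.1.le),
    ← ENNReal.ofReal_mul' (integral_inv_sub_nonneg hlow hz), ENNReal.one_lt_ofReal] at hlt
  exact ⟨z, hz, sub_neg.2 hlt⟩

end FredholmDet

section BirmanSchwinger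

variable {α : Type*} [MeasurableSpace α] {μ : Measure α} {E : α → ℝ} {Emin z μc c : ℝ}
  {h0 v : Lp ℝ 2 μ →L[ℝ] Lp ℝ 2 μ}

lemma sub_smul_apply_ae_eq (hh0 : ∀ f : Lp ℝ 2 μ, (h0 f : α → ℝ) =ᵐ[μ] fun p => E p * f p)
    (hv : ∀ f : Lp ℝ 2 μ, (v f : α → ℝ) =ᵐ[μ] fun _ => c * ∫ q, f q ∂μ) (f : Lp ℝ 2 μ) :
    ((h0 - μc • v) f : α → ℝ) =ᵐ[μ] fun q => E q * f q - μc * c * ∫ p, f p ∂μ := by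
  filter_upwards [Lp.coeFn_sub (h0 f) (μc • v f), Lp.coeFn_smul μc (v f), hh0 f, hv f]
    with q hsub hsmul hmul hconst
  rw [sub_apply, smul_apply, hsub, Pi.sub_apply, hsmul,
    Pi.smul_apply, hmul, hconst, smul_eq_mul, mul_assoc]

lemma fredholmDet_eq_zero_of_hasEigenvalue
    (hh0 : ∀ f : Lp ℝ 2 μ, (h0 f : α → ℝ) =ᵐ[μ] fun p => E p * f p)
    (hv : ∀ f : Lp ℝ 2 μ, (v f : α → ℝ) =ᵐ[μ] fun _ => c * ∫ q, f q ∂μ)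
    (hlow : ∀ᵐ q ∂μ, Emin ≤ E q) (hz : z < Emin)
    (hev : Module.End.HasEigenvalue ((h0 - μc • v : Lp ℝ 2 μ →L[ℝ] Lp ℝ 2 μ) :
      Lp ℝ 2 μ →ₗ[ℝ] Lp ℝ 2 μ) z) :
    fredholmDet μ E (μc * c) z = 0 := by
  obtain ⟨f, hf⟩ := hev.exists_hasEigenvector
  set A := μc * c * ∫ p, f p ∂μ with hA_def
  have hfA : (f : α → ℝ) =ᵐ[μ] fun q => A * (E q - z)⁻¹ := by
    have hHf : (h0 - μc • v) f = z • f := hf.apply_eq_smul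
    filter_upwards [sub_smul_apply_ae_eq hh0 hv f, Lp.coeFn_smul z f, hlow]
      with q happly hsmul hq
    have heq : E q * f q - A = z * f q := by rw [← happly, hHf, hsmul]; rfl
    rw [eq_mul_inv_iff_mul_eq₀ (sub_pos.2 (hz.trans_le hq)).ne']
    linear_combination heq
  have hA : A ≠ 0 := by
    intro hA
    refine hf.2 (Lp.eq_zero_iff_ae_eq_zero.2 ?_)
    filter_upwards [hfA] with q hq
    simp [hq, hA]
  have hint : ∫ p, f p ∂μ = A * ∫ q, (E q - z)⁻¹ ∂μ := by
    rw [integral_congr_ae hfA, integral_const_mul]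
  refine (mul_eq_zero.1 (?_ : A * fredholmDet μ E (μc * c) z = 0)).resolve_left hA
  calc A * fredholmDet μ E (μc * c) z = A - μc * c * (A * ∫ q, (E q - z)⁻¹ ∂μ) := by
        unfold fredholmDet; ring
    _ = 0 := by rw [← hint, ← hA_def, sub_self]

lemma hasEigenvalue_of_fredholmDet_eq_zero [IsFiniteMeasure μ] [NeZero μ] (hE : Measurable E)
    (hh0 : ∀ f : Lp ℝ 2 μ, (h0 f : α → ℝ) =ᵐ[μ] fun p => E p * f p)
    (hv : ∀ f : Lp ℝ 2 μ, (v f : α → ℝ) =ᵐ[μ] fun _ => c * ∫ q, f q ∂μ)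
    (hlow : ∀ᵐ q ∂μ, Emin ≤ E q) (hz : z < Emin) (hΔ : fredholmDet μ E (μc * c) z = 0) :
    Module.End.HasEigenvalue ((h0 - μc • v : Lp ℝ 2 μ →L[ℝ] Lp ℝ 2 μ) :
      Lp ℝ 2 μ →ₗ[ℝ] Lp ℝ 2 μ) z := by
  have hmem := memLp_inv_sub 2 hE hlow hz
  set f := hmem.toLp _
  have hf : (f : α → ℝ) =ᵐ[μ] fun q => (E q - z)⁻¹ := hmem.coeFn_toLp
  have hf0 : f ≠ 0 := by
    rw [Ne, Lp.eq_zero_iff_ae_eq_zero]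
    intro h
    obtain ⟨q, hpos, hq, hq0⟩ := ((ae_inv_sub_mem_Ioc hlow hz).and (hf.and h)).exists
    exact hpos.1.ne' (hq.symm.trans hq0)
  have hone : μc * c * ∫ p, f p ∂μ = 1 := by
    rw [integral_congr_ae hf]
    unfold fredholmDet at hΔ
    linarith
  refine Module.End.hasEigenvalue_of_hasEigenvector ⟨Module.End.mem_eigenspace_iff.2 ?_, hf0⟩
  refine Lp.ext ?_
  filter_upwards [sub_smul_apply_ae_eq hh0 hv f, Lp.coeFn_smul z f, hf, hlow]
    with q happly hsmul hq hlowq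
  have hne : E q - z ≠ 0 := (sub_pos.2 (hz.trans_le hlowq)).ne'
  rw [ContinuousLinearMap.coe_coe, happly, hsmul, hone, Pi.smul_apply, smul_eq_mul, hq]
  field_simp
  ring

end BirmanSchwinger

theorem rank_one_bound_state_exists_unique_general (μc Emin : ℝ) (hμ : 0 < μc)
    (E : (Fin 3 → ℝ) → ℝ) (hEmeas : Measurable E)
    (hlow : ∀ᵐ q ∂μT, Emin ≤ E q)
    (h0 v : Lp ℝ 2 μT →L[ℝ] Lp ℝ 2 μT)
    (hh0 : ∀ f : Lp ℝ 2 μT, (h0 f : (Fin 3 → ℝ) → ℝ) =ᵐ[μT] fun p => E p * f p)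
    (hv : ∀ f : Lp ℝ 2 μT,
        (v f : (Fin 3 → ℝ) → ℝ) =ᵐ[μT] fun _ => (2 * Real.pi) ^ (-3 : ℤ) * ∫ q, f q ∂μT)
    (hneg : 1 < ENNReal.ofReal (μc * (2 * Real.pi) ^ (-3 : ℤ)) *
        ∫⁻ q, ENNReal.ofReal ((E q - Emin)⁻¹) ∂μT) :
    ∃! z : ℝ, z < Emin ∧
      Module.End.HasEigenvalue ((h0 - μc • v : Lp ℝ 2 μT →L[ℝ] Lp ℝ 2 μT) :
        Lp ℝ 2 μT →ₗ[ℝ] Lp ℝ 2 μT) z := by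
  rw [existsUnique_congr fun z => and_congr_right fun hz =>
    ⟨fredholmDet_eq_zero_of_hasEigenvalue hh0 hv hlow hz,
      hasEigenvalue_of_fredholmDet_eq_zero hEmeas hh0 hv hlow hz⟩]
  obtain ⟨a, hΔa, ha⟩ := (((tendsto_fredholmDet_atBot hEmeas hlow).eventually
    (lt_mem_nhds one_pos)).and (eventually_lt_atBot Emin)).exists
  obtain ⟨b, hb, hΔb⟩ := exists_fredholmDet_neg hEmeas hlow hneg
  exact existsUnique_eq_zero_of_strictAntiOn (strictAntiOn_fredholmDet hEmeas hlow (by positivity))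
    (continuousOn_fredholmDet hEmeas hlow) ha hΔa hb hΔb

/-- If `Δ(k, Emin) = 1 - μ (2π)⁻³ ∫ (E q - Emin)⁻¹ dq < 0` (the integral possibly
being `+∞`, in which case the condition holds), then `h(k) = h⁰(k) - μ v` has
exactly one eigenvalue `z(k)` in `(-∞, Emin)`. -/
theorem rank_one_bound_state_exists_unique (μc Emin C : ℝ) (hμ : 0 < μc)
    (E : (Fin 3 → ℝ) → ℝ) (hEmeas : Measurable E)
    (hlow : ∀ᵐ q ∂μT, Emin ≤ E q)
    (hupp : ∀ᵐ q ∂μT, E q ≤ C)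
    (hessInf : ∀ ε > (0 : ℝ), 0 < μT {q | E q < Emin + ε})
    (h0 v : Lp ℝ 2 μT →L[ℝ] Lp ℝ 2 μT)
    (hh0 : ∀ f : Lp ℝ 2 μT, (h0 f : (Fin 3 → ℝ) → ℝ) =ᵐ[μT] fun p => E p * f p)
    (hv : ∀ f : Lp ℝ 2 μT,
        (v f : (Fin 3 → ℝ) → ℝ) =ᵐ[μT] fun _ => (2 * Real.pi) ^ (-3 : ℤ) * ∫ q, f q ∂μT)
    (hneg : 1 < ENNReal.ofReal (μc * (2 * Real.pi) ^ (-3 : ℤ)) *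
        ∫⁻ q, ENNReal.ofReal ((E q - Emin)⁻¹) ∂μT) :
    ∃! z : ℝ, z < Emin ∧
      Module.End.HasEigenvalue ((h0 - μc • v : Lp ℝ 2 μT →L[ℝ] Lp ℝ 2 μT) :
        Lp ℝ 2 μT →ₗ[ℝ] Lp ℝ 2 μT) z :=
  rank_one_bound_state_exists_unique_general μc Emin hμ E hEmeas hlow h0 v hh0 hv hneg
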